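/- Let 1 < d₁ < 2 < d₂. Consider the integral operator T f(x) = ∫₁^∞ K(x,y) f(y) y^{d₂−1} dy with kernel K(x,y) = x^{1−d₁} y^{d₁−d₂−1} for 1 ≤ x ≤ y and K(x,y) = x^{−2} y^{2−d₂} for x > y ≥ 1. Then for every p with 1 < p < d₂/(d₁−1) there exists a constant C > 0 such that ‖Tf‖_{L^p([1,∞), μ_{d₁})} ≤ C ‖f‖_{L^p([1,∞), μ_{d₂})} for all f ∈ L^p([1,∞), μ_{d₂}). -/

import Mathlib

open MeasureTheory Set

/-- The measure on `[1,∞)` with density `r ^ (n-1)` with respect to Lebesgue measure. -/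
noncomputable def mu (n : ℝ) : Measure ℝ :=
  (volume.restrict (Ici (1 : ℝ))).withDensity fun r => ENNReal.ofReal (r ^ (n - 1))

/-!
Schur test with power weights. If `∫ K(x,y) φ(y)^q dν(y) ≤ A ψ(x)^q` and
`∫ K(x,y) ψ(x)^p dμ(x) ≤ B φ(y)^p`, then Hölder's inequality in `y` followed by Tonelli bounds the
operator with kernel `K` from `L^p(ν)` to `L^p(μ)` by `A^{1/q} B^{1/p}`. For the kernel at hand take
`φ(r) = ψ(r) = r^{-s}`: both conditions reduce to integrals of powers of `r`, which converge when
`d₁ - 1 < s q < 2` and `s p < d₂ - d₁ + 1`, and such an `s` exists because `(d₁ - 1) p < d₂`.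
-/

open scoped ENNReal

namespace ENNReal

lemma rpow_one_div_mul_rpow {r : ℝ} (hr : 0 < r) (k a : ℝ≥0∞) :
    (k ^ (1 / r) * a) ^ r = k * a ^ r := by
  rw [mul_rpow_of_nonneg _ _ hr.le, ← rpow_mul, one_div_mul_cancel hr.ne', rpow_one]

end ENNReal

section Schur

variable {X Y : Type*} [MeasurableSpace X] [MeasurableSpace Y] {μ : Measure X} {ν : Measure Y}
  {p q : ℝ}

lemma lintegral_mul_le_weighted_holder (hpq : p.HolderConjugate q) {k g φ : Y → ℝ≥0∞}
    (hk : Measurable k) (hg : Measurable g) (hφ : Measurable φ)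
    (hφ0 : ∀ᵐ y ∂ν, φ y ≠ 0) (hφtop : ∀ᵐ y ∂ν, φ y ≠ ∞) :
    ∫⁻ y, k y * g y ∂ν ≤
      (∫⁻ y, k y * φ y ^ q ∂ν) ^ (1 / q) * (∫⁻ y, k y * (g y / φ y) ^ p ∂ν) ^ (1 / p) := by
  have hsplit : ∀ᵐ y ∂ν, k y * g y = (k y ^ (1 / q) * φ y) * (k y ^ (1 / p) * (g y / φ y)) := by
    filter_upwards [hφ0, hφtop] with y h0 htop
    rw [mul_mul_mul_comm, ← ENNReal.rpow_add_of_nonneg _ _ (by positivity [hpq.symm.pos])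
      (by positivity [hpq.pos]), one_div, one_div, add_comm, hpq.inv_add_inv_eq_one,
      ENNReal.rpow_one, ENNReal.mul_div_cancel h0 htop]
  calc ∫⁻ y, k y * g y ∂ν
      = ∫⁻ y, (k y ^ (1 / q) * φ y) * (k y ^ (1 / p) * (g y / φ y)) ∂ν := lintegral_congr_ae hsplit
    _ ≤ (∫⁻ y, (k y ^ (1 / q) * φ y) ^ q ∂ν) ^ (1 / q) *
          (∫⁻ y, (k y ^ (1 / p) * (g y / φ y)) ^ p ∂ν) ^ (1 / p) :=
        ENNReal.lintegral_mul_le_Lp_mul_Lq ν hpq.symm (by fun_prop) (by fun_prop)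
    _ = _ := by
        simp only [ENNReal.rpow_one_div_mul_rpow hpq.pos,
          ENNReal.rpow_one_div_mul_rpow hpq.symm.pos]

lemma rpow_lintegral_mul_le_of_lintegral_mul_rpow_le (hpq : p.HolderConjugate q)
    {k g φ : Y → ℝ≥0∞} (hk : Measurable k) (hg : Measurable g) (hφ : Measurable φ)
    (hφ0 : ∀ᵐ y ∂ν, φ y ≠ 0) (hφtop : ∀ᵐ y ∂ν, φ y ≠ ∞) {A c : ℝ≥0∞}
    (h : ∫⁻ y, k y * φ y ^ q ∂ν ≤ A * c ^ q) :
    (∫⁻ y, k y * g y ∂ν) ^ p ≤ A ^ (p / q) * (c ^ p * ∫⁻ y, k y * (g y / φ y) ^ p ∂ν) := by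
  have hp := hpq.pos
  have hq := hpq.symm.pos
  calc (∫⁻ y, k y * g y ∂ν) ^ p
      ≤ ((A * c ^ q) ^ (1 / q) * (∫⁻ y, k y * (g y / φ y) ^ p ∂ν) ^ (1 / p)) ^ p := by
        gcongr
        exact (lintegral_mul_le_weighted_holder hpq hk hg hφ hφ0 hφtop).trans (by gcongr)
    _ = _ := by
        rw [ENNReal.mul_rpow_of_nonneg _ _ hp.le, ← ENNReal.rpow_mul, ← ENNReal.rpow_mul,
          one_div_mul_cancel hp.ne', ENNReal.rpow_one,
          ENNReal.mul_rpow_of_nonneg _ _ (by positivity), ← ENNReal.rpow_mul,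
          show q * (1 / q * p) = p by field_simp, one_div_mul_eq_div, mul_assoc]

theorem lintegral_rpow_lintegral_mul_le_schur [SFinite μ] [SFinite ν] (hpq : p.HolderConjugate q)
    {K : X → Y → ℝ≥0∞} {g φ : Y → ℝ≥0∞} {ψ : X → ℝ≥0∞} {A B : ℝ≥0∞}
    (hK : Measurable (Function.uncurry K)) (hg : Measurable g) (hφ : Measurable φ)
    (hψ : Measurable ψ) (hφ0 : ∀ᵐ y ∂ν, φ y ≠ 0) (hφtop : ∀ᵐ y ∂ν, φ y ≠ ∞)
    (hA : ∀ᵐ x ∂μ, ∫⁻ y, K x y * φ y ^ q ∂ν ≤ A * ψ x ^ q)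
    (hB : ∀ᵐ y ∂ν, ∫⁻ x, K x y * ψ x ^ p ∂μ ≤ B * φ y ^ p) :
    ∫⁻ x, (∫⁻ y, K x y * g y ∂ν) ^ p ∂μ ≤ A ^ (p / q) * B * ∫⁻ y, g y ^ p ∂ν := by
  have hp := hpq.pos
  have hKx (x : X) : Measurable (K x) := hK.comp (measurable_const.prodMk measurable_id)
  calc ∫⁻ x, (∫⁻ y, K x y * g y ∂ν) ^ p ∂μ
      ≤ ∫⁻ x, A ^ (p / q) * (ψ x ^ p * ∫⁻ y, K x y * (g y / φ y) ^ p ∂ν) ∂μ :=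
        lintegral_mono_ae <| hA.mono fun x hx =>
          rpow_lintegral_mul_le_of_lintegral_mul_rpow_le hpq (hKx x) hg hφ hφ0 hφtop hx
    _ = A ^ (p / q) * ∫⁻ x, ∫⁻ y, ψ x ^ p * (K x y * (g y / φ y) ^ p) ∂ν ∂μ := by
        rw [lintegral_const_mul _ (by fun_prop)]
        congr 1
        exact lintegral_congr fun x => (lintegral_const_mul _ (by fun_prop)).symm
    _ = A ^ (p / q) * ∫⁻ y, (g y / φ y) ^ p * ∫⁻ x, K x y * ψ x ^ p ∂μ ∂ν := by
        rw [lintegral_lintegral_swap (by fun_prop)]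
        congr 1
        refine lintegral_congr fun y => ?_
        rw [← lintegral_const_mul _ (by fun_prop)]
        congr 1 with x
        ring
    _ ≤ A ^ (p / q) * ∫⁻ y, B * g y ^ p ∂ν := by
        gcongr A ^ (p / q) * ?_
        refine lintegral_mono_ae ?_
        filter_upwards [hB, hφ0, hφtop] with y hy h0 htop
        calc (g y / φ y) ^ p * ∫⁻ x, K x y * ψ x ^ p ∂μ ≤ (g y / φ y) ^ p * (B * φ y ^ p) := by
              gcongr
          _ = B * g y ^ p := by
              rw [ENNReal.div_rpow_of_nonneg _ _ hp.le, mul_left_comm, ENNReal.div_mul_cancel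
                (by positivity) (by finiteness)]
    _ = A ^ (p / q) * B * ∫⁻ y, g y ^ p ∂ν := by
        rw [lintegral_const_mul _ (by fun_prop), mul_assoc]

theorem eLpNorm_le_of_schur [SFinite μ] [SFinite ν] (hpq : p.HolderConjugate q)
    {E F : Type*} [NormedAddCommGroup E] [NormedAddCommGroup F] {T : X → E} {f : Y → F}
    {K : X → Y → ℝ≥0∞} {φ : Y → ℝ≥0∞} {ψ : X → ℝ≥0∞} {A B : ℝ≥0∞}
    (hf : AEStronglyMeasurable f ν) (hK : Measurable (Function.uncurry K)) (hφ : Measurable φ)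
    (hψ : Measurable ψ) (hφ0 : ∀ᵐ y ∂ν, φ y ≠ 0) (hφtop : ∀ᵐ y ∂ν, φ y ≠ ∞)
    (hA : ∀ᵐ x ∂μ, ∫⁻ y, K x y * φ y ^ q ∂ν ≤ A * ψ x ^ q)
    (hB : ∀ᵐ y ∂ν, ∫⁻ x, K x y * ψ x ^ p ∂μ ≤ B * φ y ^ p)
    (hT : ∀ᵐ x ∂μ, ‖T x‖ₑ ≤ ∫⁻ y, K x y * ‖f y‖ₑ ∂ν) :
    eLpNorm T (ENNReal.ofReal p) μ ≤
      A ^ (1 / q) * B ^ (1 / p) * eLpNorm f (ENNReal.ofReal p) ν := by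
  have hp := hpq.pos
  set g := hf.enorm.mk _
  have hfg : (‖f ·‖ₑ) =ᵐ[ν] g := hf.enorm.ae_eq_mk
  have hT' : ∀ᵐ x ∂μ, ‖T x‖ₑ ≤ ∫⁻ y, K x y * g y ∂ν := by
    filter_upwards [hT] with x hx
    refine hx.trans_eq (lintegral_congr_ae ?_)
    filter_upwards [hfg] with y hy
    rw [hy]
  have hnorm_p : ∫⁻ y, ‖f y‖ₑ ^ p ∂ν = ∫⁻ y, g y ^ p ∂ν := by
    refine lintegral_congr_ae ?_
    filter_upwards [hfg] with y hy
    rw [hy]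
  rw [eLpNorm_eq_lintegral_rpow_enorm_toReal (by simpa using hp) ENNReal.ofReal_ne_top,
    eLpNorm_eq_lintegral_rpow_enorm_toReal (by simpa using hp) ENNReal.ofReal_ne_top,
    ENNReal.toReal_ofReal hp.le, hnorm_p]
  calc (∫⁻ x, ‖T x‖ₑ ^ p ∂μ) ^ (1 / p)
      ≤ (∫⁻ x, (∫⁻ y, K x y * g y ∂ν) ^ p ∂μ) ^ (1 / p) := by
        gcongr ?_ ^ _
        exact lintegral_mono_ae (hT'.mono fun x hx => by gcongr)
    _ ≤ (A ^ (p / q) * B * ∫⁻ y, g y ^ p ∂ν) ^ (1 / p) := by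
        gcongr
        exact lintegral_rpow_lintegral_mul_le_schur hpq hK hf.enorm.measurable_mk hφ hψ hφ0 hφtop
          hA hB
    _ = A ^ (1 / q) * B ^ (1 / p) * (∫⁻ y, g y ^ p ∂ν) ^ (1 / p) := by
        rw [ENNReal.mul_rpow_of_nonneg _ _ (by positivity),
          ENNReal.mul_rpow_of_nonneg _ _ (by positivity), ← ENNReal.rpow_mul,
          show p / q * (1 / p) = 1 / q by field_simp]

end Schur

open ENNReal (ofReal)

instance sFinite_mu (n : ℝ) : SFinite (mu n) := by unfold mu; infer_instance

lemma lintegral_mu (n : ℝ) (h : ℝ → ℝ≥0∞) :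
    ∫⁻ y, h y ∂(mu n) = ∫⁻ y in Ici 1, ofReal (y ^ (n - 1)) * h y := by
  rw [mu, lintegral_withDensity_eq_lintegral_mul_non_measurable _ (by fun_prop)
    (ae_of_all _ fun y => ENNReal.ofReal_lt_top)]
  rfl

lemma ae_one_le_mu (n : ℝ) : ∀ᵐ x ∂(mu n), 1 ≤ x :=
  (withDensity_absolutelyContinuous _ _).ae_le (ae_restrict_mem measurableSet_Ici)

lemma ofReal_rpow_rpow {y : ℝ} (hy : 0 ≤ y) (a : ℝ) {b : ℝ} (hb : 0 ≤ b) :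
    ofReal (y ^ a) ^ b = ofReal (y ^ (a * b)) := by
  rw [ENNReal.ofReal_rpow_of_nonneg (Real.rpow_nonneg hy a) hb, ← Real.rpow_mul hy]

lemma lintegral_mu_mul_ofReal_rpow_rpow (n : ℝ) (F : ℝ → ℝ≥0∞) (a : ℝ) {b : ℝ} (hb : 0 ≤ b) :
    ∫⁻ y, F y * ofReal (y ^ a) ^ b ∂(mu n) = ∫⁻ y, F y * ofReal (y ^ (a * b)) ∂(mu n) := by
  refine lintegral_congr_ae ?_
  filter_upwards [ae_one_le_mu n] with y hy
  rw [ofReal_rpow_rpow (zero_le_one.trans hy) a hb]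

lemma lintegral_Ioc_zero_ofReal_rpow {c x : ℝ} (hc : -1 < c) (hx : 0 ≤ x) :
    ∫⁻ y in Ioc 0 x, ofReal (y ^ c) = ofReal (x ^ (c + 1) / (c + 1)) := by
  rw [← ofReal_integral_eq_lintegral_ofReal
      ((intervalIntegrable_iff_integrableOn_Ioc_of_le hx).mp
        (intervalIntegral.intervalIntegrable_rpow' hc))
      ((ae_restrict_mem measurableSet_Ioc).mono fun y hy => Real.rpow_nonneg hy.1.le c),
    ← intervalIntegral.integral_of_le hx, integral_rpow (Or.inl hc), Real.zero_rpow (by linarith),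
    sub_zero]

lemma lintegral_Ici_ofReal_rpow {c x : ℝ} (hc : c < -1) (hx : 0 < x) :
    ∫⁻ y in Ici x, ofReal (y ^ c) = ofReal (-x ^ (c + 1) / (c + 1)) := by
  rw [← Measure.restrict_congr_set Ioi_ae_eq_Ici,
    ← ofReal_integral_eq_lintegral_ofReal (integrableOn_Ioi_rpow_of_lt hc hx)
      ((ae_restrict_mem measurableSet_Ioi).mono fun y hy => Real.rpow_nonneg (hx.trans hy).le c),
    integral_Ioi_rpow_of_lt hc hx]

noncomputable def II1Kernel (d₁ d₂ x y : ℝ) : ℝ :=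
  if x ≤ y then x ^ (1 - d₁) * y ^ (d₁ - d₂ - 1) else x ^ (-2 : ℝ) * y ^ (2 - d₂)

lemma II1Kernel_nonneg {d₁ d₂ x y : ℝ} (hx : 0 ≤ x) (hy : 0 ≤ y) : 0 ≤ II1Kernel d₁ d₂ x y := by
  unfold II1Kernel
  split_ifs <;> positivity

lemma measurable_II1Kernel (d₁ d₂ : ℝ) : Measurable (Function.uncurry (II1Kernel d₁ d₂)) :=
  Measurable.ite (measurableSet_le measurable_fst measurable_snd) (by fun_prop) (by fun_prop)

lemma enorm_integral_II1Kernel_le {d₁ d₂ x : ℝ} (hx : 0 ≤ x) (f : ℝ → ℝ) :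
    ‖∫ y in Ici 1, II1Kernel d₁ d₂ x y * f y * y ^ (d₂ - 1)‖ₑ ≤
      ∫⁻ y, ofReal (II1Kernel d₁ d₂ x y) * ‖f y‖ₑ ∂(mu d₂) := by
  refine (enorm_integral_le_lintegral_enorm _).trans_eq ?_
  rw [lintegral_mu]
  refine setLIntegral_congr_fun measurableSet_Ici fun y (hy : 1 ≤ y) => ?_
  have hy0 : 0 ≤ y := zero_le_one.trans hy
  rw [enorm_mul, enorm_mul, Real.enorm_eq_ofReal (II1Kernel_nonneg hx hy0),
    Real.enorm_eq_ofReal (Real.rpow_nonneg hy0 _)]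
  ring

lemma setLIntegral_Ico_II1Kernel_mul_rpow_le {d₁ d₂ t x : ℝ} (ht : t < 2) (hx : 1 ≤ x) :
    ∫⁻ y in Ico 1 x, ofReal (y ^ (d₂ - 1)) * (ofReal (II1Kernel d₁ d₂ x y) * ofReal (y ^ (-t))) ≤
      ofReal (x ^ (-t) / (2 - t)) := by
  have hx0 : 0 < x := one_pos.trans_le hx
  have hintegrand : ∀ y ∈ Ico 1 x,
      ofReal (y ^ (d₂ - 1)) * (ofReal (II1Kernel d₁ d₂ x y) * ofReal (y ^ (-t)))
      = ofReal (x ^ (-2 : ℝ)) * ofReal (y ^ (1 - t)) := fun y ⟨hy1, hyx⟩ => by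
    have hy0 : 0 < y := one_pos.trans_le hy1
    rw [II1Kernel, if_neg hyx.not_ge, ← ENNReal.ofReal_mul (by positivity),
      ← ENNReal.ofReal_mul (by positivity), ← ENNReal.ofReal_mul (by positivity),
      show 1 - t = d₂ - 1 + (2 - d₂) + -t by ring, Real.rpow_add hy0, Real.rpow_add hy0]
    ring_nf
  rw [setLIntegral_congr_fun measurableSet_Ico hintegrand,
    lintegral_const_mul' _ _ ENNReal.ofReal_ne_top]
  calc ofReal (x ^ (-2 : ℝ)) * ∫⁻ y in Ico 1 x, ofReal (y ^ (1 - t))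
      ≤ ofReal (x ^ (-2 : ℝ)) * ofReal (x ^ (1 - t + 1) / (1 - t + 1)) := by
        rw [← lintegral_Ioc_zero_ofReal_rpow (by linarith) hx0.le]
        gcongr _ * ?_
        exact lintegral_mono_set fun y hy => ⟨one_pos.trans_le hy.1, hy.2.le⟩
    _ = ofReal (x ^ (-t) / (2 - t)) := by
        rw [← ENNReal.ofReal_mul (by positivity), mul_div_assoc', ← Real.rpow_add hx0]
        ring_nf

lemma setLIntegral_Ici_II1Kernel_mul_rpow {d₁ d₂ t x : ℝ} (ht : d₁ - 1 < t) (hx : 0 < x) :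
    ∫⁻ y in Ici x, ofReal (y ^ (d₂ - 1)) * (ofReal (II1Kernel d₁ d₂ x y) * ofReal (y ^ (-t))) =
      ofReal (x ^ (-t) / (t - d₁ + 1)) := by
  have hintegrand : ∀ y ∈ Ici x,
      ofReal (y ^ (d₂ - 1)) * (ofReal (II1Kernel d₁ d₂ x y) * ofReal (y ^ (-t)))
      = ofReal (x ^ (1 - d₁)) * ofReal (y ^ (d₁ - 2 - t)) := fun y (hxy : x ≤ y) => by
    have hy0 : 0 < y := hx.trans_le hxy
    rw [II1Kernel, if_pos hxy, ← ENNReal.ofReal_mul (by positivity),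
      ← ENNReal.ofReal_mul (by positivity), ← ENNReal.ofReal_mul (by positivity),
      show d₁ - 2 - t = d₂ - 1 + (d₁ - d₂ - 1) + -t by ring, Real.rpow_add hy0, Real.rpow_add hy0]
    ring_nf
  rw [setLIntegral_congr_fun measurableSet_Ici hintegrand,
    lintegral_const_mul' _ _ ENNReal.ofReal_ne_top, lintegral_Ici_ofReal_rpow (by linarith) hx,
    ← ENNReal.ofReal_mul (by positivity), mul_div_assoc', mul_neg, ← Real.rpow_add hx, neg_div,
    ← div_neg]
  ring_nf

lemma lintegral_II1Kernel_mul_rpow_le_left {d₁ d₂ t x : ℝ} (ht1 : d₁ - 1 < t) (ht2 : t < 2)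
    (hx : 1 ≤ x) :
    ∫⁻ y, ofReal (II1Kernel d₁ d₂ x y) * ofReal (y ^ (-t)) ∂(mu d₂) ≤
      ofReal (1 / (t - d₁ + 1) + 1 / (2 - t)) * ofReal (x ^ (-t)) := by
  have hx0 : 0 < x := one_pos.trans_le hx
  rw [lintegral_mu, ← Ico_union_Ici_eq_Ici hx, lintegral_union measurableSet_Ici
      ((Iio_disjoint_Ici le_rfl).mono_left Ico_subset_Iio_self),
    setLIntegral_Ici_II1Kernel_mul_rpow ht1 hx0]
  refine (add_le_add_left (setLIntegral_Ico_II1Kernel_mul_rpow_le ht2 hx) _).trans_eq ?_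
  have h2t : 0 < 2 - t := by linarith
  have htd : 0 < t - d₁ + 1 := by linarith
  rw [← ENNReal.ofReal_add (by positivity) (by positivity), ← ENNReal.ofReal_mul (by positivity)]
  congr 1
  ring

lemma setLIntegral_Icc_II1Kernel_mul_rpow_le {d₁ d₂ u y : ℝ} (hd : d₁ ≤ d₂)
    (hu : u < d₂ - d₁ + 1) (hy : 1 ≤ y) :
    ∫⁻ x in Icc 1 y, ofReal (x ^ (d₁ - 1)) * (ofReal (II1Kernel d₁ d₂ x y) * ofReal (x ^ (-u))) ≤
      ofReal (y ^ (-u) / (d₂ - d₁ + 1 - u)) := by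
  have hy0 : 0 < y := one_pos.trans_le hy
  have hintegrand : ∀ x ∈ Icc 1 y,
      ofReal (x ^ (d₁ - 1)) * (ofReal (II1Kernel d₁ d₂ x y) * ofReal (x ^ (-u)))
      ≤ ofReal (y ^ (d₁ - d₂ - 1)) * ofReal (x ^ (d₂ - d₁ - u)) := fun x ⟨hx1, hxy⟩ => by
    have hx0 : 0 < x := one_pos.trans_le hx1
    rw [II1Kernel, if_pos hxy, ← ENNReal.ofReal_mul (by positivity),
      ← ENNReal.ofReal_mul (by positivity), ← ENNReal.ofReal_mul (by positivity)]
    refine ENNReal.ofReal_le_ofReal ?_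
    -- spending the factor `x ^ (d₂ - d₁) ≥ 1` makes the `[1, y]` integral scale like `y ^ (-u)`
    calc x ^ (d₁ - 1) * (x ^ (1 - d₁) * y ^ (d₁ - d₂ - 1) * x ^ (-u))
        = y ^ (d₁ - d₂ - 1) * x ^ (-u) := by
          have hcancel : x ^ (d₁ - 1) * x ^ (1 - d₁) = 1 := by
            rw [← Real.rpow_add hx0, show d₁ - 1 + (1 - d₁) = 0 by ring, Real.rpow_zero]
          linear_combination (y ^ (d₁ - d₂ - 1) * x ^ (-u)) * hcancel
      _ ≤ y ^ (d₁ - d₂ - 1) * x ^ (d₂ - d₁ - u) := by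
          gcongr
          linarith
  calc _ ≤ ∫⁻ x in Icc 1 y, ofReal (y ^ (d₁ - d₂ - 1)) * ofReal (x ^ (d₂ - d₁ - u)) :=
        setLIntegral_mono (by fun_prop) hintegrand
    _ ≤ ofReal (y ^ (d₁ - d₂ - 1)) * ofReal (y ^ (d₂ - d₁ - u + 1) / (d₂ - d₁ - u + 1)) := by
        rw [lintegral_const_mul' _ _ ENNReal.ofReal_ne_top,
          ← lintegral_Ioc_zero_ofReal_rpow (by linarith) hy0.le]
        gcongr _ * ?_
        exact lintegral_mono_set fun x hx => ⟨one_pos.trans_le hx.1, hx.2⟩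
    _ = ofReal (y ^ (-u) / (d₂ - d₁ + 1 - u)) := by
        rw [← ENNReal.ofReal_mul (by positivity), mul_div_assoc', ← Real.rpow_add hy0]
        ring_nf

lemma setLIntegral_Ioi_II1Kernel_mul_rpow_le {d₁ d₂ u y : ℝ} (hd : d₁ ≤ d₂) (hu : d₁ - 2 < u)
    (hy : 1 ≤ y) :
    ∫⁻ x in Ioi y, ofReal (x ^ (d₁ - 1)) * (ofReal (II1Kernel d₁ d₂ x y) * ofReal (x ^ (-u))) ≤
      ofReal (y ^ (-u) / (u + 2 - d₁)) := by
  have hy0 : 0 < y := one_pos.trans_le hy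
  have hintegrand : ∀ x ∈ Ioi y,
      ofReal (x ^ (d₁ - 1)) * (ofReal (II1Kernel d₁ d₂ x y) * ofReal (x ^ (-u)))
      = ofReal (y ^ (2 - d₂)) * ofReal (x ^ (d₁ - 3 - u)) := fun x (hyx : y < x) => by
    have hx0 : 0 < x := hy0.trans hyx
    rw [II1Kernel, if_neg hyx.not_ge, ← ENNReal.ofReal_mul (by positivity),
      ← ENNReal.ofReal_mul (by positivity), ← ENNReal.ofReal_mul (by positivity),
      show d₁ - 3 - u = d₁ - 1 + -2 + -u by ring, Real.rpow_add hx0, Real.rpow_add hx0]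
    ring_nf
  rw [setLIntegral_congr_fun measurableSet_Ioi hintegrand,
    lintegral_const_mul' _ _ ENNReal.ofReal_ne_top]
  calc ofReal (y ^ (2 - d₂)) * ∫⁻ x in Ioi y, ofReal (x ^ (d₁ - 3 - u))
      ≤ ofReal (y ^ (2 - d₂)) * ofReal (-y ^ (d₁ - 3 - u + 1) / (d₁ - 3 - u + 1)) := by
        rw [← lintegral_Ici_ofReal_rpow (by linarith) hy0]
        gcongr _ * ?_
        exact lintegral_mono_set Ioi_subset_Ici_self
    _ = ofReal (y ^ (d₁ - d₂ - u) / (u + 2 - d₁)) := by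
        rw [← ENNReal.ofReal_mul (by positivity), mul_div_assoc', mul_neg, ← Real.rpow_add hy0,
          neg_div, ← div_neg]
        ring_nf
    _ ≤ ofReal (y ^ (-u) / (u + 2 - d₁)) := by
        gcongr
        · linarith
        · linarith

lemma lintegral_II1Kernel_mul_rpow_le_right {d₁ d₂ u y : ℝ} (hd : d₁ ≤ d₂) (hu1 : d₁ - 2 < u)
    (hu2 : u < d₂ - d₁ + 1) (hy : 1 ≤ y) :
    ∫⁻ x, ofReal (II1Kernel d₁ d₂ x y) * ofReal (x ^ (-u)) ∂(mu d₁) ≤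
      ofReal (1 / (d₂ - d₁ + 1 - u) + 1 / (u + 2 - d₁)) * ofReal (y ^ (-u)) := by
  rw [lintegral_mu, ← Icc_union_Ioi_eq_Ici hy, lintegral_union measurableSet_Ioi
      ((Iic_disjoint_Ioi le_rfl).mono_left Icc_subset_Iic_self)]
  refine (add_le_add (setLIntegral_Icc_II1Kernel_mul_rpow_le hd hu2 hy)
    (setLIntegral_Ioi_II1Kernel_mul_rpow_le hd hu1 hy)).trans_eq ?_
  have hy0 : 0 < y := one_pos.trans_le hy
  have hbelow : 0 < d₂ - d₁ + 1 - u := by linarith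
  have habove : 0 < u + 2 - d₁ := by linarith
  rw [← ENNReal.ofReal_add (by positivity) (by positivity), ← ENNReal.ofReal_mul (by positivity)]
  congr 1
  ring

lemma exists_schur_weight_exponent {p q d₁ d₂ : ℝ} (hpq : p.HolderConjugate q) (hd₁ : 1 < d₁)
    (hd₁3 : d₁ < 3) (hp : (d₁ - 1) * p < d₂) :
    ∃ s, 0 < s ∧ d₁ - 1 < s * q ∧ s * q < 2 ∧ s * p < d₂ - d₁ + 1 := by
  have hq := hpq.symm.pos
  have hgap : (d₂ - d₁ + 1) * q - (d₁ - 1) * p = q * (d₂ - (d₁ - 1) * p) := by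
    linear_combination (d₁ - 1) * hpq.sub_one_mul_conj
  have hlt : (d₁ - 1) / q < min (2 / q) ((d₂ - d₁ + 1) / p) := by
    refine lt_min (by gcongr; linarith) ?_
    rw [div_lt_div_iff₀ hq hpq.pos]
    linarith [mul_pos hq (sub_pos.2 hp)]
  obtain ⟨s, hs1, hs2⟩ := exists_between hlt
  exact ⟨s, (div_pos (by linarith) hq).trans hs1, (div_lt_iff₀ hq).1 hs1,
    (lt_div_iff₀ hq).1 (hs2.trans_le (min_le_left _ _)),
    (lt_div_iff₀ hpq.pos).1 (hs2.trans_le (min_le_right _ _))⟩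

/-- For `1 < d₁ < 2 < d₂`, the integral operator with kernel
`K(x,y) = x^{1-d₁} y^{d₁-d₂-1}` for `x ≤ y` and `x^{-2} y^{2-d₂}` for `x > y`
is bounded from `L^p([1,∞), μ_{d₂})` to `L^p([1,∞), μ_{d₁})` for `1 < p < d₂/(d₁-1)`. -/
theorem II1_Lp_bounded
    (d₁ d₂ p : ℝ) (hd₁ : 1 < d₁) (hd₁2 : d₁ < 2) (hd₂ : 2 < d₂)
    (hp1 : 1 < p) (hp2 : p < d₂ / (d₁ - 1)) :
    ∃ C > 0, ∀ f : ℝ → ℝ, MemLp f (ENNReal.ofReal p) (mu d₂) →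
      eLpNorm (fun x => ∫ y in Ici (1 : ℝ),
          (if x ≤ y then x ^ (1 - d₁) * y ^ (d₁ - d₂ - 1) else x ^ (-2 : ℝ) * y ^ (2 - d₂))
            * f y * y ^ (d₂ - 1))
        (ENNReal.ofReal p) (mu d₁) ≤
      ENNReal.ofReal C * eLpNorm f (ENNReal.ofReal p) (mu d₂) := by
  have hpq : p.HolderConjugate p.conjExponent := .conjExponent hp1
  set q := p.conjExponent
  obtain ⟨s, hs, ht1, ht2, hu2⟩ := exists_schur_weight_exponent hpq hd₁ (by linarith)
    (by rwa [lt_div_iff₀ (by linarith), mul_comm] at hp2)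
  have hu := mul_pos hs hpq.pos
  set CA := 1 / (s * q - d₁ + 1) + 1 / (2 - s * q)
  set CB := 1 / (d₂ - d₁ + 1 - s * p) + 1 / (s * p + 2 - d₁)
  have hCA : 0 < CA := add_pos (one_div_pos.2 (by linarith)) (one_div_pos.2 (by linarith))
  have hCB : 0 < CB := add_pos (one_div_pos.2 (by linarith)) (one_div_pos.2 (by linarith))
  refine ⟨CA ^ (1 / q) * CB ^ (1 / p), mul_pos (Real.rpow_pos_of_pos hCA _)
    (Real.rpow_pos_of_pos hCB _), fun f hf => ?_⟩
  rw [ENNReal.ofReal_mul (Real.rpow_nonneg hCA.le _),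
    ← ENNReal.ofReal_rpow_of_nonneg hCA.le (one_div_nonneg.2 hpq.symm.pos.le),
    ← ENNReal.ofReal_rpow_of_nonneg hCB.le (one_div_nonneg.2 hpq.pos.le)]
  refine eLpNorm_le_of_schur (K := fun x y => ofReal (II1Kernel d₁ d₂ x y))
    (φ := fun y => ofReal (y ^ (-s))) (ψ := fun x => ofReal (x ^ (-s))) hpq hf.1
    (measurable_II1Kernel d₁ d₂).ennreal_ofReal (by fun_prop) (by fun_prop) ?_
    (ae_of_all _ fun _ => ENNReal.ofReal_ne_top) ?_ ?_ ?_
  · filter_upwards [ae_one_le_mu d₂] with y hy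
    exact (ENNReal.ofReal_pos.2 (Real.rpow_pos_of_pos (by linarith) _)).ne'
  · filter_upwards [ae_one_le_mu d₁] with x hx
    rw [lintegral_mu_mul_ofReal_rpow_rpow _ _ _ hpq.symm.pos.le,
      ofReal_rpow_rpow (by linarith) _ hpq.symm.pos.le, neg_mul]
    exact lintegral_II1Kernel_mul_rpow_le_left ht1 ht2 hx
  · filter_upwards [ae_one_le_mu d₂] with y hy
    rw [lintegral_mu_mul_ofReal_rpow_rpow _ _ _ hpq.pos.le,
      ofReal_rpow_rpow (by linarith) _ hpq.pos.le, neg_mul]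
    exact lintegral_II1Kernel_mul_rpow_le_right (by linarith) (by linarith) hu2 hy
  · filter_upwards [ae_one_le_mu d₁] with x hx
    exact enorm_integral_II1Kernel_le (by linarith) f
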